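/- arXiv:2305.11272 — 5 statements merged into one kernel-verified Lean document; each statement's English description precedes it below -/
import Mathlib

section
/- If the system is dissipative with continuous storage function λ (i.e., λ(f(x,u)) ≤ λ(x) + ℓ(x,u) for all (x,u) ∈ Z), and ψ = −λ, then the finite-horizon optimal value V_T^ψ(x) = min over feasible trajectories of length T starting at x of [Σ_{t=0}^{T−1} ℓ(x(t),u(t)) + ψ(x(T))] is monotone non-decreasing in T; in particular the limit as T → ∞ exists in ℝ ∪ {+∞} for every x ∈ X. -/
open Filter Topology

/-- If the system is dissipative with continuous storage function λ and the terminal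
penalty is ψ = -λ, then the finite-horizon optimal value is monotone non-decreasing in
the horizon; in particular the limit exists in ℝ ∪ {+∞} (here: in the extended reals). -/
theorem dissipativity_value_monotone
    {X U : Type*} [MetricSpace X] [CompactSpace X] [Nonempty X] [MetricSpace U]
    (Z : Set (X × U)) (hZ : IsCompact Z) (hsec : ∀ x : X, ∃ u : U, (x, u) ∈ Z)
    (f : X × U → X) (hf : ContinuousOn f Z)
    (ℓ : X × U → ℝ) (hℓ : ContinuousOn ℓ Z)
    (lam : X → ℝ) (hlam : Continuous lam)
    (hdiss : ∀ p ∈ Z, lam (f p) ≤ lam p.1 + ℓ p)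
    (V : ℕ → X → ℝ)
    (hV : ∀ (T : ℕ) (x : X), V T x = sInf {c : ℝ | ∃ (xs : ℕ → X) (us : ℕ → U),
      xs 0 = x ∧ (∀ t < T, (xs t, us t) ∈ Z ∧ xs (t + 1) = f (xs t, us t)) ∧
      c = (∑ t ∈ Finset.range T, ℓ (xs t, us t)) + (- lam (xs T))}) :
    ∀ x : X, Monotone (fun T => V T x) ∧
      ∃ L : EReal, Tendsto (fun T => (V T x : EReal)) atTop (nhds L) := by
  -- global bounds
  obtain ⟨x0⟩ := (inferInstance : Nonempty X)
  obtain ⟨u0, hu0⟩ := hsec x0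
  obtain ⟨p0, hp0Z, hp0⟩ := hZ.exists_isMinOn ⟨(x0, u0), hu0⟩ hℓ
  obtain ⟨xM, -, hxM⟩ := isCompact_univ.exists_isMaxOn ⟨x0, trivial⟩ hlam.continuousOn
  intro x
  set S : ℕ → Set ℝ := fun T => {c : ℝ | ∃ (xs : ℕ → X) (us : ℕ → U),
      xs 0 = x ∧ (∀ t < T, (xs t, us t) ∈ Z ∧ xs (t + 1) = f (xs t, us t)) ∧
      c = (∑ t ∈ Finset.range T, ℓ (xs t, us t)) + (- lam (xs T))} with hS
  have hne : ∀ T, (S T).Nonempty := by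
    intro T
    let xs : ℕ → X := fun n => Nat.rec x (fun _ xn => f (xn, Classical.choose (hsec xn))) n
    let us : ℕ → U := fun n => Classical.choose (hsec (xs n))
    refine ⟨_, xs, us, rfl, fun t _ => ⟨Classical.choose_spec (hsec (xs t)), rfl⟩, rfl⟩
  have hbdd : ∀ T, BddBelow (S T) := by
    intro T
    refine ⟨(T : ℝ) * ℓ p0 - lam xM, ?_⟩
    rintro c ⟨xs, us, -, hfeas, rfl⟩
    have hsum : (T : ℝ) * ℓ p0 ≤ ∑ t ∈ Finset.range T, ℓ (xs t, us t) := by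
      have := Finset.card_nsmul_le_sum (Finset.range T) (fun t => ℓ (xs t, us t)) (ℓ p0)
        (fun t ht => hp0 (hfeas t (Finset.mem_range.mp ht)).1)
      simpa [nsmul_eq_mul] using this
    have hlamb : lam (xs T) ≤ lam xM := hxM trivial
    linarith
  have mono : Monotone (fun T => V T x) := by
    apply monotone_nat_of_le_succ
    intro T
    simp only [hV]
    refine le_csInf (hne (T + 1)) ?_
    rintro c ⟨xs, us, h0, hfeas, rfl⟩
    have hmem : (∑ t ∈ Finset.range T, ℓ (xs t, us t)) + (- lam (xs T)) ∈ S T :=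
      ⟨xs, us, h0, fun t ht => hfeas t (by omega), rfl⟩
    have h1 : sInf (S T) ≤ (∑ t ∈ Finset.range T, ℓ (xs t, us t)) + (- lam (xs T)) :=
      csInf_le (hbdd T) hmem
    have hT := hfeas T (by omega)
    have hd := hdiss _ hT.1
    rw [Finset.sum_range_succ]
    rw [hT.2] at *
    simp only at hd
    linarith
  refine ⟨mono, ⟨⨆ T, (V T x : EReal), ?_⟩⟩
  exact tendsto_atTop_iSup (fun a b hab => EReal.coe_le_coe_iff.mpr (mono hab))
end

section
/- A continuous function ψ̄ on X is a fixed point of the min-shifted Bellman operator T̂ (i.e., T̂ψ̄ = ψ̄ where T̂ψ = min{ψ, Tψ + c(ψ,Tψ)}) if and only if there exists c ∈ ℝ such that Tψ̄ = ψ̄ + c (shifted Bellman Equation). -/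
/-- A continuous function is a fixed point of the min-shifted Bellman operator iff it
solves a shifted Bellman Equation. -/
theorem min_shifted_fixed_point_iff
    {X U : Type*} [MetricSpace X] [CompactSpace X] [Nonempty X] [MetricSpace U]
    (Z : Set (X × U)) (hZ : IsCompact Z) (hsec : ∀ x : X, ∃ u : U, (x, u) ∈ Z)
    (f : X × U → X) (hf : ContinuousOn f Z)
    (ℓ : X × U → ℝ) (hℓ : ContinuousOn ℓ Z)
    (T : (X → ℝ) → X → ℝ)
    (hT : ∀ ψ : X → ℝ, ∀ x : X,
      T ψ x = sInf ((fun u => ℓ (x, u) + ψ (f (x, u))) '' {u : U | (x, u) ∈ Z}))    (That : (X → ℝ) → X → ℝ)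
    (hThat : ∀ ψ : X → ℝ, ∀ x : X, That ψ x =
      min (ψ x) (T ψ x + ((⨆ y, (ψ y - T ψ y)) / 2 + (⨅ y, (ψ y - T ψ y)) / 2)))
    (ψb : X → ℝ) (hψb : Continuous ψb) :
    (∀ x, That ψb x = ψb x) ↔ ∃ c : ℝ, ∀ x, T ψb x = ψb x + c := by
  constructor
  · intro h
    -- boundedness of ℓ + ψb ∘ f on Z
    set φ : X × U → ℝ := fun z => ℓ z + ψb (f z) with hφ
    have hφc : ContinuousOn φ Z := hℓ.add (hψb.comp_continuousOn hf)
    obtain ⟨lo, hlo⟩ : ∃ lo, ∀ z ∈ Z, lo ≤ φ z := by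
      obtain ⟨z0, _, hz0⟩ := hZ.exists_isMinOn
        (Set.Nonempty.mono (Set.singleton_subset_iff.mpr
          (hsec (Classical.arbitrary X)).choose_spec) (by simp)) hφc
      exact ⟨φ z0, fun z hz => hz0 hz⟩
    obtain ⟨hi, hhi⟩ : ∃ hi, ∀ z ∈ Z, φ z ≤ hi := by
      obtain ⟨z0, _, hz0⟩ := hZ.exists_isMaxOn
        (Set.Nonempty.mono (Set.singleton_subset_iff.mpr
          (hsec (Classical.arbitrary X)).choose_spec) (by simp)) hφc
      exact ⟨φ z0, fun z hz => hz0 hz⟩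
    -- Tψb is bounded
    have hTlo : ∀ x, lo ≤ T ψb x := by
      intro x
      rw [hT]
      apply le_csInf
      · obtain ⟨u, hu⟩ := hsec x
        exact ⟨_, ⟨u, hu, rfl⟩⟩
      · rintro b ⟨u, hu, rfl⟩
        exact hlo _ hu
    have hThi : ∀ x, T ψb x ≤ hi := by
      intro x
      rw [hT]
      obtain ⟨u, hu⟩ := hsec x
      refine csInf_le_of_le ⟨lo, ?_⟩ ⟨u, hu, rfl⟩ (hhi _ hu)
      rintro b ⟨v, hv, rfl⟩
      exact hlo _ hv
    -- ψb is bounded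
    obtain ⟨plo, hplo⟩ : ∃ m, ∀ x, m ≤ ψb x := by
      obtain ⟨x0, _, hx0⟩ := isCompact_univ.exists_isMinOn Set.univ_nonempty
        hψb.continuousOn
      exact ⟨ψb x0, fun x => hx0 (Set.mem_univ x)⟩
    obtain ⟨phi, hphi⟩ : ∃ M, ∀ x, ψb x ≤ M := by
      obtain ⟨x0, _, hx0⟩ := isCompact_univ.exists_isMaxOn Set.univ_nonempty
        hψb.continuousOn
      exact ⟨ψb x0, fun x => hx0 (Set.mem_univ x)⟩
    set g : X → ℝ := fun x => ψb x - T ψb x with hg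
    have hgbddA : BddAbove (Set.range g) :=
      ⟨phi - lo, by rintro _ ⟨x, rfl⟩; exact sub_le_sub (hphi x) (hTlo x)⟩
    have hgbddB : BddBelow (Set.range g) :=
      ⟨plo - hi, by rintro _ ⟨x, rfl⟩; exact sub_le_sub (hplo x) (hThi x)⟩
    have key : ∀ x, g x ≤ (⨆ y, g y) / 2 + (⨅ y, g y) / 2 := by
      intro x
      have := h x
      rw [hThat] at this
      have hle : ψb x ≤ T ψb x + ((⨆ y, g y) / 2 + (⨅ y, g y) / 2) :=
        inf_eq_left.mp this
      simp only [hg]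
      linarith
    have hsup_le : (⨆ y, g y) ≤ (⨆ y, g y) / 2 + (⨅ y, g y) / 2 :=
      ciSup_le key
    have hsup_inf : (⨆ y, g y) ≤ ⨅ y, g y := by linarith
    have hconst : ∀ x, g x = ⨆ y, g y := by
      intro x
      have h1 : g x ≤ ⨆ y, g y := le_ciSup hgbddA x
      have h2 : (⨅ y, g y) ≤ g x := ciInf_le hgbddB x
      linarith
    refine ⟨-(⨆ y, g y), fun x => ?_⟩
    have := hconst x
    simp only [hg] at this
    linarith
  · rintro ⟨c, hc⟩ x
    have hgconst : (fun y => ψb y - T ψb y) = fun _ => -c := by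
      funext y; rw [hc y]; ring
    rw [hThat, hgconst]
    simp only [ciSup_const, ciInf_const, hc x]
    have : ψb x + c + (-c / 2 + -c / 2) = ψb x := by ring
    rw [this, min_self]
end

section
/- If ψ₁ and ψ₂ are continuous solutions of shifted Bellman Equations Tψ₁ + c₁ = ψ₁ and Tψ₂ + c₂ = ψ₂, then c₁ = c₂. -/
/-!
At a maximum point `x₀` of `ψ₁ - ψ₂` we have `ψ₁ ≤ ψ₂ + (ψ₁ x₀ - ψ₂ x₀)` everywhere, and the
Bellman operator is monotone and commutes with adding constants, so
`T ψ₁ x₀ ≤ T ψ₂ x₀ + (ψ₁ x₀ - ψ₂ x₀)`. Substituting the two shifted Bellman equations at `x₀`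
gives `c₂ ≤ c₁`; exchanging the roles of `ψ₁` and `ψ₂` gives the reverse inequality.
-/

open Set

theorem sInf_image_le_sInf_image_add {α : Type*} {S : Set α} {g h : α → ℝ} {c : ℝ}
    (hS : S.Nonempty) (hg : BddBelow (g '' S)) (hgh : ∀ u ∈ S, g u ≤ h u + c) :
    sInf (g '' S) ≤ sInf (h '' S) + c := by
  suffices sInf (g '' S) - c ≤ sInf (h '' S) by linarith
  refine le_csInf (hS.image h) ?_
  rintro _ ⟨u, hu, rfl⟩
  linarith [csInf_le hg (mem_image_of_mem g hu), hgh u hu]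

theorem IsCompact.bddBelow_image_fiber {X U : Type*} [TopologicalSpace X] [TopologicalSpace U]
    {Z : Set (X × U)} (hZ : IsCompact Z) {F : X × U → ℝ} (hF : ContinuousOn F Z) (x : X) :
    BddBelow ((fun u => F (x, u)) '' {u | (x, u) ∈ Z}) :=
  (hZ.bddBelow_image hF).mono <| by
    rintro _ ⟨u, hu, rfl⟩
    exact mem_image_of_mem F hu

section Bellman

variable {X U : Type*} [TopologicalSpace X] [TopologicalSpace U]
  {Z : Set (X × U)} {f : X × U → X} {ℓ : X × U → ℝ} {T : (X → ℝ) → X → ℝ}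

theorem bellman_le_add_of_le (hZ : IsCompact Z) (hsec : ∀ x : X, ∃ u : U, (x, u) ∈ Z)
    (hf : ContinuousOn f Z) (hℓ : ContinuousOn ℓ Z)
    (hT : ∀ ψ : X → ℝ, ∀ x : X,
      T ψ x = sInf ((fun u => ℓ (x, u) + ψ (f (x, u))) '' {u : U | (x, u) ∈ Z}))
    {ψ φ : X → ℝ} (hψ : Continuous ψ) {c : ℝ} (hle : ∀ y, ψ y ≤ φ y + c) (x : X) :
    T ψ x ≤ T φ x + c := by
  rw [hT ψ, hT φ]
  refine sInf_image_le_sInf_image_add (hsec x) ?_ fun u _ => ?_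
  · exact hZ.bddBelow_image_fiber (hℓ.add (hψ.comp_continuousOn hf)) x
  · linarith [hle (f (x, u))]

theorem shifted_bellman_shift_le [CompactSpace X] [Nonempty X] (hZ : IsCompact Z)
    (hsec : ∀ x : X, ∃ u : U, (x, u) ∈ Z) (hf : ContinuousOn f Z) (hℓ : ContinuousOn ℓ Z)
    (hT : ∀ ψ : X → ℝ, ∀ x : X,
      T ψ x = sInf ((fun u => ℓ (x, u) + ψ (f (x, u))) '' {u : U | (x, u) ∈ Z}))
    {ψ₁ ψ₂ : X → ℝ} (h₁ : Continuous ψ₁) (h₂ : Continuous ψ₂) {c₁ c₂ : ℝ}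
    (hb₁ : ∀ x, T ψ₁ x + c₁ = ψ₁ x) (hb₂ : ∀ x, T ψ₂ x + c₂ = ψ₂ x) :
    c₂ ≤ c₁ := by
  obtain ⟨x₀, -, hmax⟩ :=
    isCompact_univ.exists_isMaxOn univ_nonempty (h₁.sub h₂).continuousOn
  have hle : ∀ y, ψ₁ y ≤ ψ₂ y + (ψ₁ x₀ - ψ₂ x₀) := fun y => by
    linarith [show ψ₁ y - ψ₂ y ≤ ψ₁ x₀ - ψ₂ x₀ from hmax (mem_univ y)]
  linarith [bellman_le_add_of_le hZ hsec hf hℓ hT h₁ hle x₀, hb₁ x₀, hb₂ x₀]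

end Bellman

/-- All continuous solutions of shifted Bellman Equations share the same shift. -/
theorem shifted_bellman_same_shift
    {X U : Type*} [MetricSpace X] [CompactSpace X] [Nonempty X] [MetricSpace U]
    (Z : Set (X × U)) (hZ : IsCompact Z) (hsec : ∀ x : X, ∃ u : U, (x, u) ∈ Z)
    (f : X × U → X) (hf : ContinuousOn f Z)
    (ℓ : X × U → ℝ) (hℓ : ContinuousOn ℓ Z)
    (T : (X → ℝ) → X → ℝ)
    (hT : ∀ ψ : X → ℝ, ∀ x : X,
      T ψ x = sInf ((fun u => ℓ (x, u) + ψ (f (x, u))) '' {u : U | (x, u) ∈ Z}))    (ψ₁ ψ₂ : X → ℝ) (h₁ : Continuous ψ₁) (h₂ : Continuous ψ₂)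
    (c₁ c₂ : ℝ)
    (hb₁ : ∀ x, T ψ₁ x + c₁ = ψ₁ x) (hb₂ : ∀ x, T ψ₂ x + c₂ = ψ₂ x) :
    c₁ = c₂ :=
  le_antisymm (shifted_bellman_shift_le hZ hsec hf hℓ hT h₂ h₁ hb₂ hb₁)
    (shifted_bellman_shift_le hZ hsec hf hℓ hT h₁ h₂ hb₁ hb₂)
end

section
/- Suppose a continuous solution ψ̄ of the shifted Bellman Equation Tψ̄ = ψ̄ + c exists. Then for every continuous ψ and every k ∈ ℕ: T^kψ(x) ≤ ψ̄(x) + k·c + max_{x'∈X}[ψ(x') − ψ̄(x')] and T^kψ(x) ≥ ψ̄(x) + k·c + min_{x'∈X}[ψ(x') − ψ̄(x')] for all x ∈ X; consequently lim_{k→∞} T^kψ(x)/k = c for every x. -/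
open Filter Topology

/-- If a continuous solution of the shifted Bellman Equation exists, iterates of the
Bellman operator grow linearly with slope c, with explicit upper and lower bounds. -/
theorem bellman_iterate_bounds
    {X U : Type*} [MetricSpace X] [CompactSpace X] [Nonempty X] [MetricSpace U]
    (Z : Set (X × U)) (hZ : IsCompact Z) (hsec : ∀ x : X, ∃ u : U, (x, u) ∈ Z)
    (f : X × U → X) (hf : ContinuousOn f Z)
    (ℓ : X × U → ℝ) (hℓ : ContinuousOn ℓ Z)
    (T : (X → ℝ) → X → ℝ)
    (hT : ∀ ψ : X → ℝ, ∀ x : X,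
      T ψ x = sInf ((fun u => ℓ (x, u) + ψ (f (x, u))) '' {u : U | (x, u) ∈ Z}))    (ψb : X → ℝ) (hψb : Continuous ψb) (c : ℝ)
    (hfix : ∀ x, T ψb x = ψb x + c)
    (ψ : X → ℝ) (hψ : Continuous ψ) :
    (∀ k : ℕ, ∀ x, T^[k] ψ x ≤ ψb x + k * c + ⨆ x', (ψ x' - ψb x')) ∧
    (∀ k : ℕ, ∀ x, ψb x + k * c + (⨅ x', (ψ x' - ψb x')) ≤ T^[k] ψ x) ∧
    (∀ x, Tendsto (fun k : ℕ => T^[k] ψ x / k) atTop (nhds c)) := by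
  set M := ⨆ x', (ψ x' - ψb x') with hMdef
  set m := ⨅ x', (ψ x' - ψb x') with hmdef
  have hcont : Continuous (fun x => ψ x - ψb x) := hψ.sub hψb
  obtain ⟨xM, -, hxM⟩ := isCompact_univ.exists_isMaxOn Set.univ_nonempty hcont.continuousOn
  obtain ⟨xm, -, hxm⟩ := isCompact_univ.exists_isMinOn Set.univ_nonempty hcont.continuousOn
  have hxM : ∀ y, ψ y - ψb y ≤ ψ xM - ψb xM := fun y => hxM (Set.mem_univ y)
  have hxm : ∀ y, ψ xm - ψb xm ≤ ψ y - ψb y := fun y => hxm (Set.mem_univ y)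
  have hbddA : BddAbove (Set.range fun x => ψ x - ψb x) :=
    ⟨ψ xM - ψb xM, Set.forall_mem_range.2 hxM⟩
  have hbddB : BddBelow (Set.range fun x => ψ x - ψb x) :=
    ⟨ψ xm - ψb xm, Set.forall_mem_range.2 hxm⟩
  have hM : ∀ x, ψ x - ψb x ≤ M := fun x => le_ciSup hbddA x
  have hm : ∀ x, m ≤ ψ x - ψb x := fun x => ciInf_le hbddB x
  -- slice sets
  set K : X → Set U := fun x => {u : U | (x, u) ∈ Z} with hKdef
  have hKne : ∀ x, (K x).Nonempty := fun x => hsec x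
  have hKcomp : ∀ x, IsCompact (K x) := by
    intro x
    have h1 : IsCompact (Z ∩ {p : X × U | p.1 = x}) :=
      hZ.inter_right (isClosed_eq continuous_fst continuous_const)
    have h2 : Prod.snd '' (Z ∩ {p : X × U | p.1 = x}) = K x := by
      ext u
      constructor
      · rintro ⟨⟨a, b⟩, ⟨hz, (h : a = x)⟩, rfl⟩
        subst h; exact hz
      · intro hu; exact ⟨(x, u), ⟨hu, rfl⟩, rfl⟩
    rw [← h2]
    exact h1.image continuous_snd
  have hKmap : ∀ x, ∀ u ∈ K x, (x, u) ∈ Z := fun x u hu => hu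
  -- properties of the ψb image
  have hcontb : ∀ x : X, ContinuousOn (fun u => ℓ (x, u) + ψb (f (x, u))) (K x) := by
    intro x
    have hmk : Continuous (fun u : U => (x, u)) := Continuous.prodMk_right x
    have h1 : ContinuousOn (fun u => ℓ (x, u)) (K x) :=
      hℓ.comp hmk.continuousOn (fun u hu => hu)
    have h2 : ContinuousOn (fun u => ψb (f (x, u))) (K x) :=
      hψb.comp_continuousOn (hf.comp hmk.continuousOn (fun u hu => hu))
    exact h1.add h2
  have hSbcomp : ∀ x : X, IsCompact ((fun u => ℓ (x, u) + ψb (f (x, u))) '' K x) :=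
    fun x => (hKcomp x).image_of_continuousOn (hcontb x)
  have hSbne : ∀ x : X, ((fun u => ℓ (x, u) + ψb (f (x, u))) '' K x).Nonempty :=
    fun x => (hKne x).image _
  have hSbbdd : ∀ x : X, BddBelow ((fun u => ℓ (x, u) + ψb (f (x, u))) '' K x) :=
    fun x => (hSbcomp x).bddBelow
  have hTb_le : ∀ x : X, ∀ u ∈ K x, T ψb x ≤ ℓ (x, u) + ψb (f (x, u)) := by
    intro x u hu
    rw [hT]
    exact csInf_le (hSbbdd x) ⟨u, hu, rfl⟩
  have hTb_mem : ∀ x : X, ∃ u ∈ K x, T ψb x = ℓ (x, u) + ψb (f (x, u)) := by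
    intro x
    obtain ⟨u, hu, heq⟩ := (hSbcomp x).sInf_mem (hSbne x)
    exact ⟨u, hu, by rw [hT]; exact heq.symm⟩
  -- main induction
  have key : ∀ k : ℕ, ∀ x, ψb x + k * c + m ≤ T^[k] ψ x ∧ T^[k] ψ x ≤ ψb x + k * c + M := by
    intro k
    induction k with
    | zero =>
      intro x
      simp only [Function.iterate_zero, id_eq, Nat.cast_zero, zero_mul, add_zero]
      constructor
      · linarith [hm x]
      · linarith [hM x]
    | succ k ih =>
      intro x
      rw [Function.iterate_succ_apply']
      set g := T^[k] ψ with hg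
      have hbddS : BddBelow ((fun u => ℓ (x, u) + g (f (x, u))) '' K x) := by
        refine ⟨T ψb x + k * c + m, ?_⟩
        rintro b ⟨u, hu, rfl⟩
        have h1 := (ih (f (x, u))).1
        have h2 := hTb_le x u hu
        dsimp only
        linarith
      have hSne : ((fun u => ℓ (x, u) + g (f (x, u))) '' K x).Nonempty := (hKne x).image _
      constructor
      · rw [hT]
        refine le_csInf hSne ?_
        rintro b ⟨u, hu, rfl⟩
        have h1 := (ih (f (x, u))).1
        have h2 := hTb_le x u hu
        have h3 := hfix x
        push_cast
        linarith
      · obtain ⟨u0, hu0, heq⟩ := hTb_mem x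
        have h1 : T g x ≤ ℓ (x, u0) + g (f (x, u0)) := by
          rw [hT]; exact csInf_le hbddS ⟨u0, hu0, rfl⟩
        have h2 := (ih (f (x, u0))).2
        have h3 := hfix x
        push_cast
        linarith
  refine ⟨fun k x => (key k x).2, fun k x => (key k x).1, ?_⟩
  intro x
  have hlow : Tendsto (fun k : ℕ => (ψb x + m) / k + c) atTop (nhds c) := by
    have := (tendsto_const_div_atTop_nhds_zero_nat (ψb x + m)).add tendsto_const_nhds (b := c)
    simpa using this
  have hhigh : Tendsto (fun k : ℕ => (ψb x + M) / k + c) atTop (nhds c) := by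
    have := (tendsto_const_div_atTop_nhds_zero_nat (ψb x + M)).add tendsto_const_nhds (b := c)
    simpa using this
  refine tendsto_of_tendsto_of_tendsto_of_le_of_le' hlow hhigh ?_ ?_
  · filter_upwards [eventually_ge_atTop 1] with k hk
    have hk0 : (0 : ℝ) < k := by exact_mod_cast hk
    have h := (key k x).1
    have : (ψb x + m) / k + c = (ψb x + k * c + m) / k := by
      field_simp
      ring
    rw [this]
    exact div_le_div_of_nonneg_right h hk0.le |>.trans_eq rfl
  · filter_upwards [eventually_ge_atTop 1] with k hk
    have hk0 : (0 : ℝ) < k := by exact_mod_cast hk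
    have h := (key k x).2
    have : (ψb x + M) / k + c = (ψb x + k * c + M) / k := by
      field_simp
      ring
    rw [this]
    exact div_le_div_of_nonneg_right h hk0.le |>.trans_eq rfl
end

section
/- For the Lyapunov functional W(ψ) = d(ψ, Tψ) with d(φ₁,φ₂) = min_{c∈ℝ}‖φ₁−φ₂+c‖_∞, the min-shifted Bellman operator satisfies W(T̂ψ) ≤ W(ψ) for every continuous ψ : X → ℝ; moreover the decoupled inequalities max_x[T̂ψ(x) − T(T̂ψ)(x)] ≤ max_x[ψ(x) − Tψ(x)] and min_x[T̂ψ(x) − T(T̂ψ)(x)] ≥ min_x[ψ(x) − Tψ(x)] hold. -/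
/-!
Write `a` and `b` for the supremum and infimum of `ψ - Tψ`, and `c = (a + b) / 2`,
`d = (a - b) / 2`. The min-shift `φ = min ψ (Tψ + c)` is squeezed between `ψ - d` and `ψ`,
and between `Tψ + b` and `Tψ + c`. Monotonicity and translation invariance of `T` carry the
first squeeze over to `Tψ - d ≤ Tφ ≤ Tψ`, and subtracting gives `b ≤ φ - Tφ ≤ a` pointwise.
This is the pair of decoupled inequalities, and since `inf_c ‖h + c‖_∞ = (sup h - inf h) / 2`,
it also bounds `W(φ)` by `d = W(ψ)`.
-/

open Set

section Oscillation

variable {X : Type*} [Nonempty X] {h : X → ℝ}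

theorem iInf_iSup_abs_add_le {a b : ℝ} (hh : ∀ x, h x ∈ Icc b a) :
    ⨅ c : ℝ, ⨆ x, |h x + c| ≤ (a - b) / 2 := by
  refine ciInf_le_of_le ⟨0, ?_⟩ (-(a / 2 + b / 2)) (ciSup_le fun x => abs_le.2 ⟨?_, ?_⟩)
  · rintro _ ⟨c, rfl⟩
    exact Real.iSup_nonneg fun x => abs_nonneg _
  · linarith [(hh x).1]
  · linarith [(hh x).2]

theorem half_sub_le_iInf_iSup_abs_add (ha : BddAbove (range h)) (hb : BddBelow (range h)) :
    ((⨆ x, h x) - ⨅ x, h x) / 2 ≤ ⨅ c : ℝ, ⨆ x, |h x + c| := by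
  refine le_ciInf fun c => ?_
  obtain ⟨M, hM⟩ := ha
  obtain ⟨m, hm⟩ := hb
  have hbdd : BddAbove (range fun x => |h x + c|) :=
    ⟨max |m + c| |M + c|, forall_mem_range.2 fun x =>
      abs_le_max_abs_abs (by linarith [hm ⟨x, rfl⟩]) (by linarith [hM ⟨x, rfl⟩])⟩
  have hsup : (⨆ x, h x) ≤ (⨆ x, |h x + c|) - c := ciSup_le fun x => by
    linarith [le_abs_self (h x + c), le_ciSup hbdd x]
  have hinf : -(⨆ x, |h x + c|) - c ≤ ⨅ x, h x := le_ciInf fun x => by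
    linarith [neg_abs_le (h x + c), le_ciSup hbdd x]
  linarith

end Oscillation

section MinShift

variable {X : Type*}

def minShift (T : (X → ℝ) → X → ℝ) (c : ℝ) (ψ : X → ℝ) (x : X) : ℝ :=
  min (ψ x) (T ψ x + c)

theorem sub_minShift_mem_Icc {T : (X → ℝ) → X → ℝ}
    (hmono : ∀ φ₁ φ₂ : X → ℝ, BddBelow (range φ₁) → φ₁ ≤ φ₂ → T φ₁ ≤ T φ₂)
    (hshift : ∀ (φ : X → ℝ) (e : ℝ), BddBelow (range φ) →
      T (fun y => φ y + e) = fun y => T φ y + e)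
    {ψ : X → ℝ} (hψ : BddBelow (range ψ)) {a b : ℝ} (hab : ∀ x, ψ x - T ψ x ∈ Icc b a)
    (x : X) :
    minShift T (a / 2 + b / 2) ψ x - T (minShift T (a / 2 + b / 2) ψ) x ∈ Icc b a := by
  set φ := minShift T (a / 2 + b / 2) ψ
  set d := a / 2 - b / 2 with hd
  obtain ⟨m, hm⟩ := hψ
  have hbdd : ∀ {χ : X → ℝ}, (∀ y, ψ y + -d ≤ χ y) → BddBelow (range χ) := fun hχ =>
    ⟨m + -d, forall_mem_range.2 fun y => by linarith [hm ⟨y, rfl⟩, hχ y]⟩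
  have hφ_le : φ ≤ ψ := fun y => min_le_left _ _
  have hle_φ : ∀ y, ψ y + -d ≤ φ y := fun y =>
    le_min (by linarith [(hab y).1, (hab y).2]) (by linarith [(hab y).2])
  have hTφ_le : T φ x ≤ T ψ x := hmono φ ψ (hbdd hle_φ) hφ_le x
  have hle_Tφ : T ψ x + -d ≤ T φ x := by
    have := hmono _ φ (hbdd fun _ => le_rfl) hle_φ x
    rwa [hshift ψ (-d) ⟨m, hm⟩] at this
  have hφ_le_shift : φ x ≤ T ψ x + (a / 2 + b / 2) := min_le_right _ _
  have hshift_le_φ : T ψ x + b ≤ φ x :=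
    le_min (by linarith [(hab x).1]) (by linarith [(hab x).1, (hab x).2])
  constructor <;> linarith

end MinShift

section Bellman

variable {X U : Type*} {Z : Set (X × U)} {f : X × U → X} {ℓ : X × U → ℝ}

noncomputable def bellman (Z : Set (X × U)) (f : X × U → X) (ℓ : X × U → ℝ) (ψ : X → ℝ) (x : X) : ℝ :=
  sInf ((fun u => ℓ (x, u) + ψ (f (x, u))) '' {u | (x, u) ∈ Z})

theorem bellman_eq_iInf (ψ : X → ℝ) (x : X) :
    bellman Z f ℓ ψ x = ⨅ u : {u | (x, u) ∈ Z}, ℓ (x, u) + ψ (f (x, u)) :=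
  sInf_image'

theorem bddBelow_range_bellman_integrand (hℓ : BddBelow (ℓ '' Z)) {ψ : X → ℝ}
    (hψ : BddBelow (range ψ)) (x : X) :
    BddBelow (range fun u : {u | (x, u) ∈ Z} => ℓ (x, u) + ψ (f (x, u))) := by
  obtain ⟨m₀, hm₀⟩ := hℓ
  obtain ⟨m, hm⟩ := hψ
  exact ⟨m₀ + m, forall_mem_range.2 fun u =>
    add_le_add (hm₀ (mem_image_of_mem ℓ u.2)) (hm ⟨_, rfl⟩)⟩

theorem bellman_le_of_mem (hℓ : BddBelow (ℓ '' Z)) {ψ : X → ℝ} (hψ : BddBelow (range ψ))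
    {x : X} {u : U} (hu : (x, u) ∈ Z) : bellman Z f ℓ ψ x ≤ ℓ (x, u) + ψ (f (x, u)) := by
  rw [bellman_eq_iInf]
  exact ciInf_le (bddBelow_range_bellman_integrand hℓ hψ x) ⟨u, hu⟩

theorem le_bellman (hsec : ∀ x, ∃ u, (x, u) ∈ Z) {m₀ m : ℝ} (hℓ : ∀ z ∈ Z, m₀ ≤ ℓ z)
    {ψ : X → ℝ} (hψ : ∀ y, m ≤ ψ y) (x : X) : m₀ + m ≤ bellman Z f ℓ ψ x := by
  obtain ⟨u, hu⟩ := hsec x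
  have : Nonempty {u | (x, u) ∈ Z} := ⟨⟨u, hu⟩⟩
  rw [bellman_eq_iInf]
  exact le_ciInf fun v => add_le_add (hℓ _ v.2) (hψ _)

theorem bellman_mono (hℓ : BddBelow (ℓ '' Z)) {ψ₁ ψ₂ : X → ℝ} (hψ₁ : BddBelow (range ψ₁))
    (h : ψ₁ ≤ ψ₂) : bellman Z f ℓ ψ₁ ≤ bellman Z f ℓ ψ₂ := fun x => by
  simp only [bellman_eq_iInf]
  exact ciInf_mono (bddBelow_range_bellman_integrand hℓ hψ₁ x) fun u => by gcongr; exact h _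

theorem bellman_add_const (hsec : ∀ x, ∃ u, (x, u) ∈ Z) (hℓ : BddBelow (ℓ '' Z))
    (ψ : X → ℝ) (e : ℝ) (hψ : BddBelow (range ψ)) :
    bellman Z f ℓ (fun y => ψ y + e) = fun x => bellman Z f ℓ ψ x + e := funext fun x => by
  obtain ⟨u, hu⟩ := hsec x
  have : Nonempty {u | (x, u) ∈ Z} := ⟨⟨u, hu⟩⟩
  simp only [bellman_eq_iInf, ← add_assoc]
  exact ((OrderIso.addRight e).map_ciInf (bddBelow_range_bellman_integrand hℓ hψ x)).symm

theorem bddAbove_range_sub_bellman (hsec : ∀ x, ∃ u, (x, u) ∈ Z) (hℓ : BddBelow (ℓ '' Z))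
    {ψ : X → ℝ} (hψb : BddBelow (range ψ)) (hψa : BddAbove (range ψ)) :
    BddAbove (range fun x => ψ x - bellman Z f ℓ ψ x) := by
  obtain ⟨m₀, hm₀⟩ := hℓ
  obtain ⟨m, hm⟩ := hψb
  obtain ⟨M, hM⟩ := hψa
  refine ⟨M - (m₀ + m), forall_mem_range.2 fun x => ?_⟩
  have := le_bellman (f := f) hsec (fun z hz => hm₀ (mem_image_of_mem ℓ hz))
    (fun y => hm ⟨y, rfl⟩) x
  linarith [hM ⟨x, rfl⟩]

theorem bddBelow_range_sub_bellman (hsec : ∀ x, ∃ u, (x, u) ∈ Z) (hℓb : BddBelow (ℓ '' Z))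
    (hℓa : BddAbove (ℓ '' Z)) {ψ : X → ℝ} (hψb : BddBelow (range ψ))
    (hψa : BddAbove (range ψ)) :
    BddBelow (range fun x => ψ x - bellman Z f ℓ ψ x) := by
  obtain ⟨M₀, hM₀⟩ := hℓa
  obtain ⟨m, hm⟩ := hψb
  obtain ⟨M, hM⟩ := hψa
  refine ⟨m - (M₀ + M), forall_mem_range.2 fun x => ?_⟩
  obtain ⟨u, hu⟩ := hsec x
  have := bellman_le_of_mem (f := f) hℓb ⟨m, hm⟩ hu
  linarith [hM₀ (mem_image_of_mem ℓ hu), hM ⟨f (x, u), rfl⟩, hm ⟨x, rfl⟩]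

end Bellman

theorem min_shifted_lyapunov_general
    {X U : Type*} [MetricSpace X] [CompactSpace X] [Nonempty X] [MetricSpace U]
    (Z : Set (X × U)) (hZ : IsCompact Z) (hsec : ∀ x : X, ∃ u : U, (x, u) ∈ Z)
    (f : X × U → X)
    (ℓ : X × U → ℝ) (hℓ : ContinuousOn ℓ Z)
    (T : (X → ℝ) → X → ℝ)
    (hT : ∀ ψ : X → ℝ, ∀ x : X,
      T ψ x = sInf ((fun u => ℓ (x, u) + ψ (f (x, u))) '' {u : U | (x, u) ∈ Z}))    (That : (X → ℝ) → X → ℝ)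
    (hThat : ∀ ψ : X → ℝ, ∀ x : X, That ψ x =
      min (ψ x) (T ψ x + ((⨆ y, (ψ y - T ψ y)) / 2 + (⨅ y, (ψ y - T ψ y)) / 2)))
    (ψ : X → ℝ) (hψ : Continuous ψ) :
    ((⨅ c : ℝ, ⨆ x, |That ψ x - T (That ψ) x + c|) ≤
        ⨅ c : ℝ, ⨆ x, |ψ x - T ψ x + c|) ∧
    ((⨆ x, (That ψ x - T (That ψ) x)) ≤ ⨆ x, (ψ x - T ψ x)) ∧
    ((⨅ x, (ψ x - T ψ x)) ≤ ⨅ x, (That ψ x - T (That ψ) x)) := by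
  obtain rfl : T = bellman Z f ℓ := funext fun φ => funext (hT φ)
  set a := ⨆ y, (ψ y - bellman Z f ℓ ψ y)
  set b := ⨅ y, (ψ y - bellman Z f ℓ ψ y)
  rw [show That ψ = minShift (bellman Z f ℓ) (a / 2 + b / 2) ψ from funext (hThat ψ)]
  have hℓZ := hZ.image_of_continuousOn hℓ
  have hψR := isCompact_range hψ
  have hga := bddAbove_range_sub_bellman (f := f) hsec hℓZ.bddBelow hψR.bddBelow hψR.bddAbove
  have hgb := bddBelow_range_sub_bellman (f := f) hsec hℓZ.bddBelow hℓZ.bddAbove hψR.bddBelow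
    hψR.bddAbove
  have key := sub_minShift_mem_Icc (fun _ _ => bellman_mono hℓZ.bddBelow)
    (bellman_add_const hsec hℓZ.bddBelow) hψR.bddBelow
    (fun x => ⟨ciInf_le hgb x, le_ciSup hga x⟩)
  exact ⟨(iInf_iSup_abs_add_le key).trans (half_sub_le_iInf_iSup_abs_add hga hgb),
    ciSup_le fun x => (key x).2, le_ciInf fun x => (key x).1⟩

/-- The Lyapunov functional W(ψ) = d(ψ, Tψ) is non-increasing along the min-shifted
Bellman iteration, together with the decoupled max/min inequalities. -/
theorem min_shifted_lyapunov
    {X U : Type*} [MetricSpace X] [CompactSpace X] [Nonempty X] [MetricSpace U]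
    (Z : Set (X × U)) (hZ : IsCompact Z) (hsec : ∀ x : X, ∃ u : U, (x, u) ∈ Z)
    (f : X × U → X) (hf : ContinuousOn f Z)
    (ℓ : X × U → ℝ) (hℓ : ContinuousOn ℓ Z)
    (T : (X → ℝ) → X → ℝ)
    (hT : ∀ ψ : X → ℝ, ∀ x : X,
      T ψ x = sInf ((fun u => ℓ (x, u) + ψ (f (x, u))) '' {u : U | (x, u) ∈ Z}))    (That : (X → ℝ) → X → ℝ)
    (hThat : ∀ ψ : X → ℝ, ∀ x : X, That ψ x =
      min (ψ x) (T ψ x + ((⨆ y, (ψ y - T ψ y)) / 2 + (⨅ y, (ψ y - T ψ y)) / 2)))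
    (ψ : X → ℝ) (hψ : Continuous ψ) :
    ((⨅ c : ℝ, ⨆ x, |That ψ x - T (That ψ) x + c|) ≤
        ⨅ c : ℝ, ⨆ x, |ψ x - T ψ x + c|) ∧
    ((⨆ x, (That ψ x - T (That ψ) x)) ≤ ⨆ x, (ψ x - T ψ x)) ∧
    ((⨅ x, (ψ x - T ψ x)) ≤ ⨅ x, (That ψ x - T (That ψ) x)) :=
  min_shifted_lyapunov_general Z hZ hsec f ℓ hℓ T hT That hThat ψ hψ
end
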